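/- Let X = Σ_{i=0}^∞ a_i ε_{−i} be a linear process in which only finitely many coefficients a_i are nonzero and at least M ≥ 1 of them are nonzero, and suppose that for some β > 0 the function u ↦ u^β φ_ε(u) belongs to L¹(ℝ) ∩ L^∞(ℝ). Then the characteristic function φ of X satisfies ∫_ℝ |u|^{Mβ} |φ(u)| du < ∞. -/

import Mathlib

/-!
Independence factors the characteristic function of the finite sum `X = ∑ aᵢ ε₋ᵢ` as
`φ(u) = ∏ᵢ φ_ε(aᵢ u)`. Since `‖φ_ε‖ ≤ 1`, dropping all but `M` factors with `aᵢ ≠ 0` and writing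
`G v = |v|^β ‖φ_ε v‖` gives `|u|^{Mβ} ‖φ(u)‖ ≤ ∏ᵢ |aᵢ|^{-β} G(aᵢ u)`. One factor of the right-hand
side is integrable by the change of variables `v = aᵢ u`, and the others are bounded.
-/

open MeasureTheory ProbabilityTheory Complex

/-- The characteristic function of a real random variable `Y` on `(Ω, μ)`:
`t ↦ E[exp(I t Y)]`. -/
noncomputable def charFn {Ω : Type*} [MeasurableSpace Ω] (μ : Measure Ω) (Y : Ω → ℝ) (t : ℝ) : ℂ :=
  ∫ ω, Complex.exp (Complex.I * (t * Y ω : ℝ)) ∂μ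

lemma charFn_eq_charFun_map {Ω : Type*} [MeasurableSpace Ω] {μ : Measure Ω} {Y : Ω → ℝ}
    (hY : AEMeasurable Y μ) : charFn μ Y = charFun (μ.map Y) := by
  ext t
  rw [charFun_apply_real, integral_map hY (by fun_prop), charFn]
  simp only [ofReal_mul, mul_comm I]

lemma charFn_congr_ae {Ω : Type*} [MeasurableSpace Ω] {μ : Measure Ω} {Y Z : Ω → ℝ}
    (h : Y =ᵐ[μ] Z) : charFn μ Y = charFn μ Z := by
  ext t
  exact integral_congr_ae (h.mono fun ω hω => by simp only [hω])

lemma charFun_map_finsetSum_mul_eq_prod {Ω ι : Type*} [MeasurableSpace Ω] {μ : Measure Ω}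
    [IsProbabilityMeasure μ] {Y : ι → Ω → ℝ} {ν : Measure ℝ}
    (hindep : iIndepFun Y μ) (hY : ∀ i, AEMeasurable (Y i) μ) (hν : ∀ i, μ.map (Y i) = ν)
    (a : ι → ℝ) (T : Finset ι) (u : ℝ) :
    charFun (μ.map fun ω => ∑ i ∈ T, a i * Y i ω) u = ∏ i ∈ T, charFun ν (a i * u) := by
  have hindep' : iIndepFun (fun i ω => a i * Y i ω) μ :=
    hindep.comp (fun i x => a i * x) fun i => measurable_const_mul (a i)
  rw [hindep'.restrict T |>.charFun_map_fun_finsetSum_eq_prod fun i _ => (hY i).const_mul (a i)]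
  simp only [Finset.prod_apply, charFun_map_mul_comp (hY _), hν]

lemma integrable_prod_comp_mul {ι : Type*} {G : ℝ → ℝ} (hG : Integrable G) (hGm : Measurable G)
    {C : ℝ} (hGC : ∀ v, ‖G v‖ ≤ C) {s : Finset ι} {a : ι → ℝ} {i₀ : ι} (hi₀ : i₀ ∈ s)
    (ha : a i₀ ≠ 0) : Integrable fun u => ∏ i ∈ s, G (a i * u) := by
  classical
  simp_rw [← Finset.mul_prod_erase s _ hi₀]
  have hrest : Measurable fun u => ∏ i ∈ s.erase i₀, G (a i * u) :=
    Finset.measurable_prod _ fun i _ => hGm.comp (measurable_const_mul (a i))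
  refine (hG.comp_mul_left' ha).mul_bdd (c := C ^ (s.erase i₀).card) hrest.aestronglyMeasurable
    (.of_forall fun u => ?_)
  rw [norm_prod, ← Finset.prod_const]
  exact Finset.prod_le_prod (fun _ _ => norm_nonneg _) fun i _ => hGC _

lemma abs_rpow_card_mul_prod_norm_eq {ι : Type*} (φ : ℝ → ℂ) (β : ℝ) {s : Finset ι} {a : ι → ℝ}
    (ha : ∀ i ∈ s, a i ≠ 0) (u : ℝ) :
    |u| ^ (s.card * β) * ∏ i ∈ s, ‖φ (a i * u)‖
      = (∏ i ∈ s, (|a i| ^ β)⁻¹) * ∏ i ∈ s, |a i * u| ^ β * ‖φ (a i * u)‖ := by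
  rw [mul_comm (s.card : ℝ), Real.rpow_mul_natCast (abs_nonneg u), ← Finset.prod_const,
    ← Finset.prod_mul_distrib, ← Finset.prod_mul_distrib]
  refine Finset.prod_congr rfl fun i hi => ?_
  have : 0 < |a i| ^ β := by have := ha i hi; positivity
  rw [abs_mul, Real.mul_rpow (abs_nonneg _) (abs_nonneg _)]
  field_simp

theorem integrable_abs_rpow_mul_prod_norm_comp_mul {ι : Type*} {φ : ℝ → ℂ} (hφm : Measurable φ)
    (hφ : ∀ v, ‖φ v‖ ≤ 1) {β : ℝ} (hL1 : Integrable fun v => |v| ^ β * ‖φ v‖)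
    (hLinf : ∃ C, ∀ v, |v| ^ β * ‖φ v‖ ≤ C) {s T : Finset ι} (hsT : s ⊆ T) (hs : s.Nonempty)
    {a : ι → ℝ} (ha : ∀ i ∈ s, a i ≠ 0) :
    Integrable fun u => |u| ^ (s.card * β) * ∏ i ∈ T, ‖φ (a i * u)‖ := by
  obtain ⟨i₀, hi₀⟩ := hs
  obtain ⟨C, hC⟩ := hLinf
  have hmaj := (integrable_prod_comp_mul hL1 (by fun_prop) (C := C)
    (fun v => (Real.norm_of_nonneg (by positivity)).trans_le (hC v)) hi₀ (ha i₀ hi₀)).const_mul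
    (∏ i ∈ s, (|a i| ^ β)⁻¹)
  refine hmaj.mono' (by fun_prop) (.of_forall fun u => ?_)
  rw [Real.norm_of_nonneg (by positivity), ← abs_rpow_card_mul_prod_norm_eq φ β ha]
  exact mul_le_mul_of_nonneg_left (Finset.prod_le_prod_of_subset_of_le_one hsT
    (fun _ _ => norm_nonneg _) fun i _ _ => hφ _) (by positivity)

theorem stmt14_general {Ω : Type*} [MeasurableSpace Ω] (μ : Measure Ω) [IsProbabilityMeasure μ]
    (ε : ℤ → Ω → ℝ)
    (hindep : iIndepFun ε μ)
    (hident : ∀ i, IdentDistrib (ε i) (ε 1) μ μ)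
    (a : ℕ → ℝ) (hfin : {i : ℕ | a i ≠ 0}.Finite)
    (M : ℕ) (hM : 1 ≤ M)
    (hMnonzero : ∃ s : Finset ℕ, s.card = M ∧ ∀ i ∈ s, a i ≠ 0)
    (X : Ω → ℝ)
    (hX : ∀ᵐ ω ∂μ, HasSum (fun i : ℕ => a i * ε (-(i:ℤ)) ω) (X ω))
    (β : ℝ)
    (hL1 : Integrable (fun u : ℝ => |u| ^ β * ‖charFn μ (ε 1) u‖) volume)
    (hLinf : ∃ C : ℝ, ∀ u : ℝ, |u| ^ β * ‖charFn μ (ε 1) u‖ ≤ C) :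
    Integrable (fun u : ℝ => |u| ^ ((M : ℝ) * β) * ‖charFn μ X u‖) volume := by
  obtain ⟨s, rfl, hs⟩ := hMnonzero
  set T := hfin.toFinset
  have hY : ∀ i : ℕ, AEMeasurable (ε (-(i : ℤ))) μ := fun i => (hident _).aemeasurable_fst
  have hXT : X =ᵐ[μ] fun ω => ∑ i ∈ T, a i * ε (-(i : ℤ)) ω :=
    hX.mono fun ω hω => hω.unique <| hasSum_sum_of_ne_finset_zero fun i hi => by
      simp [not_not.mp (mt hfin.mem_toFinset.mpr hi)]
  have hcharX : charFn μ X = fun u => ∏ i ∈ T, charFun (μ.map (ε 1)) (a i * u) := by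
    rw [charFn_congr_ae hXT, charFn_eq_charFun_map (Finset.aemeasurable_fun_sum _
      fun i _ => (hY i).const_mul (a i))]
    ext u
    exact charFun_map_finsetSum_mul_eq_prod
      (hindep.precomp (neg_injective.comp Nat.cast_injective)) hY (fun i => (hident _).map_eq) a T u
  have hε₁ := (hident 1).aemeasurable_fst
  have : IsProbabilityMeasure (μ.map (ε 1)) := Measure.isProbabilityMeasure_map hε₁
  rw [charFn_eq_charFun_map hε₁] at hL1 hLinf
  simp_rw [hcharX, norm_prod]
  exact integrable_abs_rpow_mul_prod_norm_comp_mul measurable_charFun norm_charFun_le_one hL1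
    hLinf (fun i hi => hfin.mem_toFinset.mpr (hs i hi)) (Finset.card_pos.mp hM) hs

/-- let `X = Σ_{i=0}^∞ a_i ε_{−i}` be a linear process in which only finitely
many coefficients are nonzero and at least `M ≥ 1` of them are nonzero, and suppose that for
some `β > 0` the function `u ↦ u^β φ_ε(u)` is in `L¹(ℝ) ∩ L^∞(ℝ)`. Then the characteristic
function `φ` of `X` satisfies `∫ |u|^{Mβ} |φ(u)| du < ∞`. -/
theorem stmt14 {Ω : Type*} [MeasurableSpace Ω] (μ : Measure Ω) [IsProbabilityMeasure μ]
    (ε : ℤ → Ω → ℝ) (hmeas : ∀ i, Measurable (ε i))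
    (hindep : iIndepFun ε μ)
    (hident : ∀ i, IdentDistrib (ε i) (ε 1) μ μ)
    (a : ℕ → ℝ) (hfin : {i : ℕ | a i ≠ 0}.Finite)
    (M : ℕ) (hM : 1 ≤ M)
    (hMnonzero : ∃ s : Finset ℕ, s.card = M ∧ ∀ i ∈ s, a i ≠ 0)
    (X : Ω → ℝ)
    (hX : ∀ᵐ ω ∂μ, HasSum (fun i : ℕ => a i * ε (-(i:ℤ)) ω) (X ω))
    (β : ℝ) (hβ : 0 < β)
    (hL1 : Integrable (fun u : ℝ => |u| ^ β * ‖charFn μ (ε 1) u‖) volume)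
    (hLinf : ∃ C : ℝ, ∀ u : ℝ, |u| ^ β * ‖charFn μ (ε 1) u‖ ≤ C) :
    Integrable (fun u : ℝ => |u| ^ ((M : ℝ) * β) * ‖charFn μ X u‖) volume :=
  stmt14_general μ ε hindep hident a hfin M hM hMnonzero X hX β hL1 hLinf
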